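/- Let G' be obtained from G = SK_n (n ≥ 4) by an isometric expansion with respect to an isometric cover (G¹, G⁰, G²). Then G' is a two-dimensional partial cube (G' ∈ F(Q_3)) if and only if the expansion is peripheral (G¹ ⊆ G² or G² ⊆ G¹) and G⁰ is an isometric subtree of SK_n. -/

import Mathlib

open Finset

/-- The hypercube graph on subsets of `Fin m`. -/
def cubeGraph (m : ℕ) : SimpleGraph (Finset (Fin m)) where
  Adj A B := (symmDiff A B).card = 1
  symm := ⟨fun A B h => by show (symmDiff (B : Finset (Fin m)) A).card = 1; rwa [symmDiff_comm]⟩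
  loopless := ⟨fun A h => by change (symmDiff A A).card = 1 at h; simp only [symmDiff_self, bot_eq_empty, card_empty] at h; exact absurd h (by norm_num)⟩

/-- `V` is (the vertex set of) a partial cube isometrically embedded in `Q_m`:
the distance in the induced subgraph equals the Hamming distance. -/
def IsPC {m : ℕ} (V : Set (Finset (Fin m))) : Prop :=
  ∀ u v : V, ((cubeGraph m).induce V).dist u v = (symmDiff u.1 v.1).card

def Shatters {m : ℕ} (V : Set (Finset (Fin m))) (Y : Finset (Fin m)) : Prop :=
  ∀ Z ⊆ Y, ∃ B ∈ V, B ∩ Y = Z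

def VCdimLE {m : ℕ} (V : Set (Finset (Fin m))) (d : ℕ) : Prop :=
  ∀ Y : Finset (Fin m), Shatters V Y → Y.card ≤ d

inductive PCStep {m : ℕ} : Set (Finset (Fin m)) → Set (Finset (Fin m)) → Prop
  | contract (i : Fin m) (V : Set (Finset (Fin m))) :
      PCStep V ((fun B => B.erase i) '' V)
  | restrictPos (i : Fin m) (V : Set (Finset (Fin m))) :
      PCStep V {B ∈ V | i ∈ B}
  | restrictNeg (i : Fin m) (V : Set (Finset (Fin m))) :
      PCStep V {B ∈ V | i ∉ B}

/-- Partial-cube minor relation: a sequence of contractions and restrictions. -/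
def PCMinor {m : ℕ} : Set (Finset (Fin m)) → Set (Finset (Fin m)) → Prop :=
  Relation.ReflTransGen PCStep

/-- `W` is (the vertex set of) a `k`-dimensional subcube of `Q_m`. -/
def IsCubeFam {m : ℕ} (k : ℕ) (W : Set (Finset (Fin m))) : Prop :=
  ∃ (Y X : Finset (Fin m)), Disjoint Y X ∧ X.card = k ∧
    W = {B | ∃ Z ⊆ X, B = Y ∪ Z}

/-- `G` has the cube `Q_k` as a pc-minor. -/
def HasQMinor {m : ℕ} (V : Set (Finset (Fin m))) (k : ℕ) : Prop :=
  ∃ W, PCMinor V W ∧ IsCubeFam k W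

def hdist {m : ℕ} (A B : Finset (Fin m)) : ℕ := (symmDiff A B).card

def IsConvexIn {m : ℕ} (V S : Set (Finset (Fin m))) : Prop :=
  S ⊆ V ∧ ∀ u ∈ S, ∀ v ∈ S, ∀ x ∈ V, hdist u x + hdist x v = hdist u v → x ∈ S

def convexHullIn {m : ℕ} (V S : Set (Finset (Fin m))) : Set (Finset (Fin m)) :=
  ⋂₀ {T | S ⊆ T ∧ IsConvexIn V T}

def IsGatedIn {m : ℕ} (V S : Set (Finset (Fin m))) : Prop :=
  S ⊆ V ∧ ∀ x ∈ V, ∃ g ∈ S, ∀ y ∈ S, hdist x g + hdist g y = hdist x y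

/-- The standardly embedded full subdivision `SK_n` in `Q_n`: singletons and pairs. -/
def SKset (n : ℕ) : Set (Finset (Fin n)) := {B | B.card = 1 ∨ B.card = 2}

/-- A standardly embedded copy of `SK_n` in `Q_m` along the injection `ι`. -/
def skCopy {m : ℕ} (n : ℕ) (ι : Fin n → Fin m) : Set (Finset (Fin m)) :=
  (fun B => B.image ι) '' SKset n


/-- Isometric expansion of a partial cube along a cover `(V1, V0, V2)`:
one copy of `V1`, one copy of `V2` shifted into the new coordinate. -/
def expansion {m : ℕ} (V1 V2 : Set (Finset (Fin m))) : Set (Finset (Fin (m + 1))) :=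
  (fun B => B.image Fin.castSucc) '' V1 ∪
    (fun B => insert (Fin.last m) (B.image Fin.castSucc)) '' V2

/-!
Members of `V1` and `V2` have at most two elements, so a triple shattered by the expansion is
itself a member: the new coordinate together with a pair `{i, j}`, and it is shattered exactly when
both `V1` and `V2` shatter `{i, j}`. For an isometric `V ⊆ SK_n`, shattering `{i, j}` amounts to
containing `{i}`, `{j}` and a third singleton `{k}`. Three singletons span the subdivided triangle
on `i, j, k`, a hexagon; conversely every vertex of a cycle has two neighbours on it, and following
them from a singleton through its two pairs yields three singletons. So an isometric `G⁰` is a tree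
iff it has at most two singletons; in a peripheral expansion `G⁰` is the smaller side, so a pair
shattered by both sides is shattered by `G⁰`.
If the expansion is not peripheral, there are singletons `{y} ∈ V1 \ V2` and `{z} ∈ V2 \ V1`.
Every pair `{y, w}` lies in `V1`, and by isometry only `{y, z}` lies in `V2`; the edge
`{w} — {y, w}` then puts `{w}` into `V1`, and symmetrically into `V2`, for all `w ≠ y, z`. As
`n ≥ 4`, there are two such `u, v`, and `{u, v}` is shattered by `V1` (with `{y}`) and by `V2`
(with `{z}`).
-/

open SimpleGraph

theorem Finset.card_symmDiff_add_two_mul_card_inter {α : Type*} [DecidableEq α] (A B : Finset α) :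
    #(symmDiff A B) + 2 * #(A ∩ B) = #A + #B := by
  rw [symmDiff_def, sup_eq_union, card_union_of_disjoint disjoint_sdiff_sdiff]
  have := card_sdiff_add_card_inter A B
  have := card_sdiff_add_card_inter B A
  rw [inter_comm B A] at this
  omega

theorem Finset.subset_pair_iff_eq {α : Type*} [DecidableEq α] {s : Finset α} {a b : α} :
    s ⊆ {a, b} ↔ s = ∅ ∨ s = {a} ∨ s = {b} ∨ s = {a, b} := by
  rw [← coe_subset, coe_pair, Set.subset_pair_iff_eq]
  simp only [← coe_singleton, ← coe_insert, coe_inj, ← coe_empty]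

theorem SimpleGraph.Walk.IsCycle.exists_ne_adj_adj_of_mem_support {W : Type*}
    {G : SimpleGraph W} {u v : W} {c : G.Walk v v} (hc : c.IsCycle) (hu : u ∈ c.support) :
    ∃ w₁ ∈ c.support, ∃ w₂ ∈ c.support, w₁ ≠ w₂ ∧ G.Adj u w₁ ∧ G.Adj u w₂ := by
  obtain ⟨w₁, w₂, hne, hset⟩ := Set.ncard_eq_two.1 (hc.ncard_neighborSet_toSubgraph_eq_two hu)
  have hnbr : ∀ w ∈ c.toSubgraph.neighborSet u, w ∈ c.support ∧ G.Adj u w := fun w hw =>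
    ⟨c.mem_verts_toSubgraph.1 (c.toSubgraph.edge_vert hw.symm), c.toSubgraph.adj_sub hw⟩
  obtain ⟨h₁, a₁⟩ := hnbr w₁ (hset ▸ Set.mem_insert w₁ {w₂})
  obtain ⟨h₂, a₂⟩ := hnbr w₂ (hset ▸ Set.mem_insert_of_mem w₁ rfl)
  exact ⟨w₁, h₁, w₂, h₂, hne, a₁, a₂⟩

theorem Shatters.mono_right {m : ℕ} {V : Set (Finset (Fin m))} {Y Y' : Finset (Fin m)}
    (hY : Shatters V Y) (h : Y' ⊆ Y) : Shatters V Y' := by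
  intro Z hZ
  obtain ⟨B, hB, hBY⟩ := hY Z (hZ.trans h)
  refine ⟨B, hB, ?_⟩
  rw [← inter_eq_right.2 h, ← inter_assoc, hBY, inter_eq_left.2 hZ]

section Expansion
variable {m : ℕ}

theorem last_notMem_image_castSucc (S : Finset (Fin m)) : Fin.last m ∉ S.image Fin.castSucc := by
  simp [Fin.castSucc_ne_last]

theorem image_castSucc_inter_insert_last (C S : Finset (Fin m)) :
    C.image Fin.castSucc ∩ insert (Fin.last m) (S.image Fin.castSucc) =
      (C ∩ S).image Fin.castSucc := by
  rw [inter_insert_of_notMem (last_notMem_image_castSucc C),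
    image_inter _ _ (Fin.castSucc_injective m)]

theorem insert_last_inter_insert_last (C S : Finset (Fin m)) :
    insert (Fin.last m) (C.image Fin.castSucc) ∩ insert (Fin.last m) (S.image Fin.castSucc) =
      insert (Fin.last m) ((C ∩ S).image Fin.castSucc) := by
  rw [← insert_inter_distrib, image_inter _ _ (Fin.castSucc_injective m)]

theorem insert_last_image_castSucc_injective :
    Function.Injective fun S : Finset (Fin m) => insert (Fin.last m) (S.image Fin.castSucc) := by
  intro S T h
  apply image_injective (Fin.castSucc_injective m)
  simpa [erase_insert (last_notMem_image_castSucc _)] using congrArg (erase · (Fin.last m)) h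

theorem exists_eq_image_castSucc_of_subset {S : Finset (Fin m)} {Z : Finset (Fin (m + 1))}
    (hZ : Z ⊆ insert (Fin.last m) (S.image Fin.castSucc)) :
    ∃ T ⊆ S, Z = T.image Fin.castSucc ∨ Z = insert (Fin.last m) (T.image Fin.castSucc) := by
  refine ⟨S.filter (fun i => i.castSucc ∈ Z), filter_subset _ _, ?_⟩
  have hmem : ∀ i : Fin m, i.castSucc ∈ Z → i ∈ S := fun i hi => by
    simpa [Fin.castSucc_ne_last] using hZ hi
  by_cases hlast : Fin.last m ∈ Z
  · right
    ext x
    induction x using Fin.lastCases with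
    | last => simp [hlast]
    | cast i => simpa [Fin.castSucc_ne_last] using hmem i
  · left
    ext x
    induction x using Fin.lastCases with
    | last => simp [hlast, Fin.castSucc_ne_last]
    | cast i => simpa using hmem i

theorem shatters_expansion_iff (V1 V2 : Set (Finset (Fin m))) (S : Finset (Fin m)) :
    Shatters (expansion V1 V2) (insert (Fin.last m) (S.image Fin.castSucc)) ↔
      Shatters V1 S ∧ Shatters V2 S := by
  have himage := image_injective (Fin.castSucc_injective m)
  constructor
  · intro h
    constructor
    · intro T hT
      obtain ⟨B, hB, hBT⟩ := h (T.image Fin.castSucc)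
        ((image_subset_image hT).trans (subset_insert _ _))
      rcases hB with ⟨C, hC, rfl⟩ | ⟨C, hC, rfl⟩
      · exact ⟨C, hC, himage (by rw [← hBT, image_castSucc_inter_insert_last])⟩
      · refine absurd ?_ (last_notMem_image_castSucc T)
        rw [← hBT, insert_last_inter_insert_last]
        exact mem_insert_self _ _
    · intro T hT
      obtain ⟨B, hB, hBT⟩ := h (insert (Fin.last m) (T.image Fin.castSucc))
        (insert_subset_insert _ (image_subset_image hT))
      rcases hB with ⟨C, hC, rfl⟩ | ⟨C, hC, rfl⟩
      · refine absurd ?_ (last_notMem_image_castSucc (C ∩ S))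
        rw [← image_castSucc_inter_insert_last, hBT]
        exact mem_insert_self _ _
      · refine ⟨C, hC, insert_last_image_castSucc_injective ?_⟩
        rwa [insert_last_inter_insert_last] at hBT
  · rintro ⟨h1, h2⟩ Z hZ
    obtain ⟨T, hTS, rfl | rfl⟩ := exists_eq_image_castSucc_of_subset hZ
    · obtain ⟨C, hC, hCT⟩ := h1 T hTS
      exact ⟨_, Or.inl ⟨C, hC, rfl⟩, by rw [image_castSucc_inter_insert_last, hCT]⟩
    · obtain ⟨C, hC, hCT⟩ := h2 T hTS
      exact ⟨_, Or.inr ⟨C, hC, rfl⟩, by rw [insert_last_inter_insert_last, hCT]⟩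

theorem vcdimLE_expansion_iff {V1 V2 : Set (Finset (Fin m))} {d : ℕ}
    (h1 : ∀ B ∈ V1, #B ≤ d) (h2 : ∀ B ∈ V2, #B ≤ d) :
    VCdimLE (expansion V1 V2) d ↔
      ∀ S : Finset (Fin m), #S = d → ¬ (Shatters V1 S ∧ Shatters V2 S) := by
  have hlift : ∀ C : Finset (Fin m), #(insert (Fin.last m) (C.image Fin.castSucc)) = #C + 1 :=
    fun C => by rw [card_insert_of_notMem (last_notMem_image_castSucc C),
      card_image_of_injective _ (Fin.castSucc_injective m)]
  constructor
  · intro hvc S hS hsh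
    have := hvc _ ((shatters_expansion_iff V1 V2 S).2 hsh)
    rw [hlift] at this
    omega
  · intro h Y hY
    -- a shattered `(d + 1)`-set is contained in one member of the expansion, so equals it
    by_contra! hcard
    obtain ⟨Y', hY'Y, hY'⟩ := exists_subset_card_eq (s := Y) (n := d + 1) hcard
    obtain ⟨B, hB, hBY'⟩ := hY.mono_right hY'Y Y' Subset.rfl
    have hY'B : Y' ⊆ B := inter_eq_right.1 hBY'
    rcases hB with ⟨C, hC, rfl⟩ | ⟨C, hC, rfl⟩
    · have := card_le_card hY'B
      rw [card_image_of_injective _ (Fin.castSucc_injective m)] at this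
      have := h1 C hC
      omega
    · have hCd : #C = d := by
        have hle := card_le_card hY'B
        rw [hlift] at hle
        have := h2 C hC
        omega
      have hY'eq : Y' = insert (Fin.last m) (C.image Fin.castSucc) :=
        eq_of_subset_of_card_le hY'B (by rw [hlift, hY', hCd])
      exact h C hCd ((shatters_expansion_iff V1 V2 C).1 (hY'eq ▸ hY.mono_right hY'Y))

end Expansion

namespace IsPC
variable {m : ℕ} {V : Set (Finset (Fin m))}

theorem reachable (hV : IsPC V) (u v : V) : ((cubeGraph m).induce V).Reachable u v := by
  by_cases huv : u = v
  · exact huv ▸ Reachable.refl u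
  refine Reachable.of_dist_ne_zero ?_
  rw [hV u v, Ne, card_eq_zero, symmDiff_eq_empty]
  exact fun h => huv (Subtype.ext h)

theorem connected (hV : IsPC V) (hne : V.Nonempty) : ((cubeGraph m).induce V).Connected :=
  have : Nonempty V := hne.to_subtype
  ⟨hV.reachable⟩

theorem exists_adj_of_ne (hV : IsPC V) {A B : Finset (Fin m)} (hA : A ∈ V) (hB : B ∈ V)
    (hAB : A ≠ B) : ∃ M ∈ V, (cubeGraph m).Adj A M := by
  obtain ⟨p⟩ := hV.reachable ⟨A, hA⟩ ⟨B, hB⟩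
  have hp : ¬ p.Nil := Walk.not_nil_of_ne (fun h => hAB (congrArg Subtype.val h))
  exact ⟨p.snd.1, p.snd.2, p.adj_snd hp⟩

theorem exists_adj_adj_of_card_symmDiff_eq_two (hV : IsPC V) {A B : Finset (Fin m)}
    (hA : A ∈ V) (hB : B ∈ V) (h2 : #(symmDiff A B) = 2) :
    ∃ M ∈ V, (cubeGraph m).Adj A M ∧ (cubeGraph m).Adj M B := by
  have hdist : ((cubeGraph m).induce V).edist ⟨A, hA⟩ ⟨B, hB⟩ = 2 := by
    rw [← (hV.reachable _ _).coe_dist_eq_edist, hV, h2]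
    rfl
  obtain ⟨M, hM⟩ := (edist_eq_two_iff.1 hdist).2.2
  rw [mem_commonNeighbors] at hM
  exact ⟨M.1, M.2, hM.1, hM.2.symm⟩

end IsPC

section SK
variable {n : ℕ}

theorem singleton_mem_SKset (x : Fin n) : {x} ∈ SKset n := Or.inl (card_singleton x)

theorem pair_mem_SKset {x y : Fin n} (hxy : x ≠ y) : {x, y} ∈ SKset n := Or.inr (card_pair hxy)

theorem card_le_two_of_mem_SKset {B : Finset (Fin n)} (hB : B ∈ SKset n) : #B ≤ 2 := by
  rcases hB with h | h <;> omega

theorem cubeGraph_adj_singleton_pair {x y : Fin n} (hxy : x ≠ y) :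
    (cubeGraph n).Adj {x} {x, y} := by
  show #(symmDiff {x} {x, y}) = 1
  have := card_symmDiff_add_two_mul_card_inter {x} {x, y}
  rw [singleton_inter_of_mem (mem_insert_self x {y}), card_singleton, card_pair hxy] at this
  omega

theorem exists_eq_pair_of_adj_singleton {x : Fin n} {A : Finset (Fin n)} (hA : A ∈ SKset n)
    (h : (cubeGraph n).Adj {x} A) : ∃ y, x ≠ y ∧ A = {x, y} := by
  have hcard := card_symmDiff_add_two_mul_card_inter {x} A
  rw [show #(symmDiff {x} A) = 1 from h, card_singleton] at hcard
  have hx : x ∈ A := by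
    by_contra hx
    rw [singleton_inter_of_notMem hx, card_empty] at hcard
    rcases hA with hA | hA <;> omega
  have hA2 : #A = 2 := by
    rw [singleton_inter_of_mem hx, card_singleton] at hcard
    omega
  obtain ⟨a, b, hab, rfl⟩ := card_eq_two.1 hA2
  rcases mem_insert.1 hx with rfl | hxb
  · exact ⟨b, hab, rfl⟩
  · rw [mem_singleton.1 hxb]
    exact ⟨a, hab.symm, pair_comm a b⟩

theorem eq_singleton_of_adj_pair {x y : Fin n} {A : Finset (Fin n)} (hA : A ∈ SKset n)
    (hxy : x ≠ y) (h : (cubeGraph n).Adj A {x, y}) : A = {x} ∨ A = {y} := by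
  have hcard := card_symmDiff_add_two_mul_card_inter A {x, y}
  rw [show #(symmDiff A {x, y}) = 1 from h, card_pair hxy] at hcard
  have hA1 : #A = 1 := by rcases hA with hA | hA <;> omega
  obtain ⟨a, rfl⟩ := card_eq_one.1 hA1
  obtain ⟨b, hab, hb⟩ := exists_eq_pair_of_adj_singleton (pair_mem_SKset hxy) h
  have hx : x ∈ ({a, b} : Finset (Fin n)) := hb ▸ mem_insert_self x {y}
  have hy : y ∈ ({a, b} : Finset (Fin n)) := hb ▸ mem_insert_of_mem (mem_singleton_self y)
  simp only [mem_insert, mem_singleton] at hx hy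
  rcases hx with rfl | rfl
  · exact Or.inl rfl
  · rcases hy with rfl | rfl
    · exact Or.inr rfl
    · exact absurd rfl hxy

end SK

section IsometricSK
variable {n : ℕ} {V : Set (Finset (Fin n))}

theorem pair_mem_of_singleton_mem (hV : V ⊆ SKset n) (hpc : IsPC V) {x y : Fin n}
    (hxy : x ≠ y) (hx : {x} ∈ V) (hy : {y} ∈ V) : {x, y} ∈ V := by
  have h2 : #(symmDiff {x} {y}) = 2 := by
    have := card_symmDiff_add_two_mul_card_inter {x} {y}
    rw [singleton_inter_of_notMem (by simpa using hxy), card_empty, card_singleton,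
      card_singleton] at this
    omega
  obtain ⟨M, hM, hxM, hMy⟩ := hpc.exists_adj_adj_of_card_symmDiff_eq_two hx hy h2
  obtain ⟨z, hxz, rfl⟩ := exists_eq_pair_of_adj_singleton (hV hM) hxM
  rcases eq_singleton_of_adj_pair (singleton_mem_SKset y) hxz hMy.symm with h | h
  · exact absurd (singleton_injective h) hxy.symm
  · rwa [singleton_injective h]

theorem singleton_mem_of_pair_mem (hV : V ⊆ SKset n) (hpc : IsPC V) {x y z : Fin n}
    (hxy : x ≠ y) (hxz : x ≠ z) (hyz : y ≠ z) (hy : {x, y} ∈ V) (hz : {x, z} ∈ V) :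
    {x} ∈ V := by
  have h2 : #(symmDiff {x, y} {x, z}) = 2 := by
    have := card_symmDiff_add_two_mul_card_inter {x, y} {x, z}
    rw [← insert_inter_distrib, singleton_inter_of_notMem (by simpa using hyz), insert_empty,
      card_singleton, card_pair hxy, card_pair hxz] at this
    omega
  obtain ⟨M, hM, hyM, hMz⟩ := hpc.exists_adj_adj_of_card_symmDiff_eq_two hy hz h2
  rcases eq_singleton_of_adj_pair (hV hM) hxy hyM.symm with rfl | rfl
  · exact hM
  · rcases eq_singleton_of_adj_pair (singleton_mem_SKset y) hxz hMz with h | h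
    · exact absurd (singleton_injective h) hxy.symm
    · exact absurd (singleton_injective h) hyz

theorem exists_singleton_mem_of_mem (hV : V ⊆ SKset n) (hpc : IsPC V) {A B : Finset (Fin n)}
    (hA : A ∈ V) (hB : B ∈ V) (hAB : A ≠ B) : ∃ x ∈ B, {x} ∈ V := by
  rcases hV hB with h | h
  · obtain ⟨x, rfl⟩ := card_eq_one.1 h
    exact ⟨x, mem_singleton_self x, hB⟩
  · obtain ⟨x, y, hxy, rfl⟩ := card_eq_two.1 h
    obtain ⟨M, hM, hBM⟩ := hpc.exists_adj_of_ne hB hA hAB.symm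
    rcases eq_singleton_of_adj_pair (hV hM) hxy hBM.symm with rfl | rfl
    · exact ⟨x, mem_insert_self x {y}, hM⟩
    · exact ⟨y, mem_insert_of_mem (mem_singleton_self y), hM⟩

end IsometricSK

def ContainsThreeSingletons {n : ℕ} (V : Set (Finset (Fin n))) : Prop :=
  ∃ a b c : Fin n, a ≠ b ∧ a ≠ c ∧ b ≠ c ∧ {a} ∈ V ∧ {b} ∈ V ∧ {c} ∈ V

theorem ContainsThreeSingletons.mono {n : ℕ} {V W : Set (Finset (Fin n))}
    (h : ContainsThreeSingletons V) (hVW : V ⊆ W) : ContainsThreeSingletons W := by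
  obtain ⟨a, b, c, hab, hac, hbc, ha, hb, hc⟩ := h
  exact ⟨a, b, c, hab, hac, hbc, hVW ha, hVW hb, hVW hc⟩

section ShattersSK
variable {n : ℕ} {V : Set (Finset (Fin n))}

theorem shatters_pair_of_singleton_mem (hV : V ⊆ SKset n) (hpc : IsPC V) {i j k : Fin n}
    (hij : i ≠ j) (hik : i ≠ k) (hjk : j ≠ k) (hi : {i} ∈ V) (hj : {j} ∈ V) (hk : {k} ∈ V) :
    Shatters V {i, j} := by
  intro Z hZ
  rcases subset_pair_iff_eq.1 hZ with rfl | rfl | rfl | rfl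
  · exact ⟨{k}, hk, by simp [hik.symm, hjk.symm]⟩
  · exact ⟨{i}, hi, singleton_inter_of_mem (mem_insert_self i {j})⟩
  · exact ⟨{j}, hj, singleton_inter_of_mem (mem_insert_of_mem (mem_singleton_self j))⟩
  · exact ⟨{i, j}, pair_mem_of_singleton_mem hV hpc hij hi hj, inter_self _⟩

theorem pair_mem_of_shatters_pair (hV : V ⊆ SKset n) {i j : Fin n} (hij : i ≠ j)
    (h : Shatters V {i, j}) : {i, j} ∈ V := by
  obtain ⟨B, hB, hBij⟩ := h {i, j} Subset.rfl
  rwa [eq_of_subset_of_card_le (inter_eq_right.1 hBij)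
    ((card_le_two_of_mem_SKset (hV hB)).trans (card_pair hij).ge)]

theorem singleton_mem_of_shatters_pair (hV : V ⊆ SKset n) (hpc : IsPC V) {i j : Fin n}
    (hij : i ≠ j) (h : Shatters V {i, j}) : {i} ∈ V := by
  obtain ⟨B, hB, hBi⟩ := h {i} (by simp)
  have hiB : i ∈ B := (mem_inter.1 (hBi ▸ mem_singleton_self i)).1
  have hjB : j ∉ B := fun hjB => hij (mem_singleton.1 (hBi ▸ mem_inter.2 ⟨hjB, by simp⟩)).symm
  rcases hV hB with hB1 | hB2
  · rwa [← eq_singleton_iff_unique_mem.2 ⟨hiB, fun x hx => card_le_one.1 hB1.le x hx i hiB⟩]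
  · obtain ⟨y, hy⟩ := card_eq_one.1 (by rw [card_erase_of_mem hiB, hB2] : #(B.erase i) = 1)
    have hBy : B = {i, y} := by rw [← insert_erase hiB, hy]
    have hiy : i ≠ y := by rintro rfl; exact notMem_erase i B (hy ▸ mem_singleton_self i)
    have hyj : y ≠ j := by rintro rfl; exact hjB (hBy ▸ mem_insert_of_mem (mem_singleton_self y))
    exact singleton_mem_of_pair_mem hV hpc hiy hij hyj (hBy ▸ hB)
      (pair_mem_of_shatters_pair hV hij h)

theorem exists_singleton_mem_of_shatters_pair (hV : V ⊆ SKset n) (hpc : IsPC V) {i j : Fin n}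
    (hij : i ≠ j) (h : Shatters V {i, j}) : ∃ k, i ≠ k ∧ j ≠ k ∧ {k} ∈ V := by
  obtain ⟨B, hB, hB0⟩ := h ∅ (empty_subset _)
  have hne : {i, j} ≠ B := by rintro rfl; simp at hB0
  obtain ⟨k, hkB, hk⟩ :=
    exists_singleton_mem_of_mem hV hpc (pair_mem_of_shatters_pair hV hij h) hB hne
  have hkij : k ∉ ({i, j} : Finset (Fin n)) := fun h => by simpa [hB0] using mem_inter.2 ⟨hkB, h⟩
  simp only [mem_insert, mem_singleton, not_or] at hkij
  exact ⟨k, Ne.symm hkij.1, Ne.symm hkij.2, hk⟩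

theorem containsThreeSingletons_of_shatters_pair (hV : V ⊆ SKset n) (hpc : IsPC V)
    {i j : Fin n} (hij : i ≠ j) (h : Shatters V {i, j}) : ContainsThreeSingletons V := by
  obtain ⟨k, hik, hjk, hk⟩ := exists_singleton_mem_of_shatters_pair hV hpc hij h
  refine ⟨i, j, k, hij, hik, hjk, singleton_mem_of_shatters_pair hV hpc hij h, ?_, hk⟩
  exact singleton_mem_of_shatters_pair hV hpc hij.symm (pair_comm i j ▸ h)

end ShattersSK

section TreeSK
variable {n : ℕ}

theorem singleton_mem_of_ne_adj_adj_pair {P : Set (Finset (Fin n))} (hP : P ⊆ SKset n)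
    {x y : Fin n} (hxy : x ≠ y) {w₁ w₂ : Finset (Fin n)} (h₁ : w₁ ∈ P) (h₂ : w₂ ∈ P)
    (hne : w₁ ≠ w₂) (a₁ : (cubeGraph n).Adj {x, y} w₁) (a₂ : (cubeGraph n).Adj {x, y} w₂) :
    {x} ∈ P ∧ {y} ∈ P := by
  rcases eq_singleton_of_adj_pair (hP h₁) hxy a₁.symm with rfl | rfl <;>
  rcases eq_singleton_of_adj_pair (hP h₂) hxy a₂.symm with rfl | rfl <;>
  first | exact absurd rfl hne | exact ⟨‹_›, ‹_›⟩

theorem containsThreeSingletons_of_forall_exists_ne_adj_adj {P : Set (Finset (Fin n))}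
    (hP : P ⊆ SKset n) (hne : P.Nonempty)
    (h : ∀ u ∈ P, ∃ w₁ ∈ P, ∃ w₂ ∈ P,
      w₁ ≠ w₂ ∧ (cubeGraph n).Adj u w₁ ∧ (cubeGraph n).Adj u w₂) :
    ContainsThreeSingletons P := by
  have hpair : ∀ x y, x ≠ y → {x, y} ∈ P → {x} ∈ P ∧ {y} ∈ P := fun x y hxy hxyP => by
    obtain ⟨w₁, h₁, w₂, h₂, hw, a₁, a₂⟩ := h _ hxyP
    exact singleton_mem_of_ne_adj_adj_pair hP hxy h₁ h₂ hw a₁ a₂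
  obtain ⟨x, hx⟩ : ∃ x, {x} ∈ P := by
    obtain ⟨u, hu⟩ := hne
    rcases hP hu with h1 | h2
    · obtain ⟨x, rfl⟩ := card_eq_one.1 h1
      exact ⟨x, hu⟩
    · obtain ⟨a, b, hab, rfl⟩ := card_eq_two.1 h2
      exact ⟨a, (hpair a b hab hu).1⟩
  obtain ⟨w₁, h₁, w₂, h₂, hw, a₁, a₂⟩ := h _ hx
  obtain ⟨y, hxy, rfl⟩ := exists_eq_pair_of_adj_singleton (hP h₁) a₁
  obtain ⟨z, hxz, rfl⟩ := exists_eq_pair_of_adj_singleton (hP h₂) a₂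
  have hyz : y ≠ z := by rintro rfl; exact hw rfl
  exact ⟨x, y, z, hxy, hxz, hyz, hx, (hpair x y hxy h₁).2, (hpair x z hxz h₂).2⟩

theorem containsThreeSingletons_of_not_isAcyclic {V : Set (Finset (Fin n))} (hV : V ⊆ SKset n)
    (h : ¬ ((cubeGraph n).induce V).IsAcyclic) : ContainsThreeSingletons V := by
  obtain ⟨v, c, hc⟩ : ∃ (v : V) (c : ((cubeGraph n).induce V).Walk v v), c.IsCycle := by
    simpa [IsAcyclic] using h
  have hsub : Subtype.val '' {u | u ∈ c.support} ⊆ V := by rintro _ ⟨u, -, rfl⟩; exact u.2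
  refine ContainsThreeSingletons.mono ?_ hsub
  refine containsThreeSingletons_of_forall_exists_ne_adj_adj (hsub.trans hV)
    ⟨v, v, c.start_mem_support, rfl⟩ ?_
  rintro _ ⟨u, hu, rfl⟩
  obtain ⟨w₁, h₁, w₂, h₂, hw, a₁, a₂⟩ := hc.exists_ne_adj_adj_of_mem_support hu
  exact ⟨w₁, ⟨w₁, h₁, rfl⟩, w₂, ⟨w₂, h₂, rfl⟩, fun h => hw (Subtype.ext h), a₁, a₂⟩

theorem not_isAcyclic_of_subdivided_triangle {V : Set (Finset (Fin n))} {i j k : Fin n}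
    (hij : i ≠ j) (hjk : j ≠ k) (hki : k ≠ i) (hi : {i} ∈ V) (hj : {j} ∈ V) (hk : {k} ∈ V)
    (hij' : {i, j} ∈ V) (hjk' : {j, k} ∈ V) (hki' : {k, i} ∈ V) :
    ¬ ((cubeGraph n).induce V).IsAcyclic := by
  have adj_sp : ∀ {x y : Fin n} (hx : {x} ∈ V) (hxy : {x, y} ∈ V), x ≠ y →
      ((cubeGraph n).induce V).Adj ⟨{x}, hx⟩ ⟨{x, y}, hxy⟩ :=
    fun _ _ hxy => cubeGraph_adj_singleton_pair hxy
  have adj_ps : ∀ {x y : Fin n} (hxy : {x, y} ∈ V) (hy : {y} ∈ V), x ≠ y →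
      ((cubeGraph n).induce V).Adj ⟨{x, y}, hxy⟩ ⟨{y}, hy⟩ := fun {x y} _ _ hxy => by
    show (cubeGraph n).Adj {x, y} {y}
    rw [pair_comm]
    exact (cubeGraph_adj_singleton_pair hxy.symm).symm
  rw [isAcyclic_iff_forall_adj_isBridge]
  intro h
  apply h (adj_sp hi hij' hij)
  have adj_del : ∀ {x y : V}, ((cubeGraph n).induce V).Adj x y → y.1 ≠ {i} → y.1 ≠ {i, j} →
      (((cubeGraph n).induce V).deleteEdges {s(⟨{i}, hi⟩, ⟨{i, j}, hij'⟩)}).Adj x y :=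
    fun hxy h1 h2 => (deleteEdges_adj ..).2 ⟨hxy, by simp [Subtype.ext_iff, h1, h2]⟩
  -- the rest of the hexagon, `{i, j}, {j}, {j, k}, {k}, {k, i}, {i}`, avoids the edge `{i}{i, j}`
  refine Reachable.symm (((adj_del (adj_ps hij' hj hij) ?_ ?_).reachable.trans
    (adj_del (adj_sp hj hjk' hjk) ?_ ?_).reachable).trans
    ((adj_del (adj_ps hjk' hk hjk) ?_ ?_).reachable.trans
      ((adj_del (adj_sp hk hki' hki) ?_ ?_).reachable.trans
        (adj_del (adj_ps hki' hi hki).symm ?_ ?_).reachable.symm)))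
  all_goals
    intro h
    simp only [Finset.ext_iff, mem_insert, mem_singleton] at h
    have := h i; have := h j; have := h k
    tauto

theorem isTree_induce_iff_not_containsThreeSingletons {V : Set (Finset (Fin n))}
    (hV : V ⊆ SKset n) (hpc : IsPC V) (hne : V.Nonempty) :
    ((cubeGraph n).induce V).IsTree ↔ ¬ ContainsThreeSingletons V := by
  constructor
  · rintro htree ⟨a, b, c, hab, hac, hbc, ha, hb, hc⟩
    exact not_isAcyclic_of_subdivided_triangle hab hbc hac.symm ha hb hc
      (pair_mem_of_singleton_mem hV hpc hab ha hb) (pair_mem_of_singleton_mem hV hpc hbc hb hc)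
      (pair_mem_of_singleton_mem hV hpc hac.symm hc ha) htree.isAcyclic
  · intro h
    exact ⟨hpc.connected hne, not_not.1 (mt (containsThreeSingletons_of_not_isAcyclic hV) h)⟩

end TreeSK

def CoversEdges {n : ℕ} (V1 V2 : Set (Finset (Fin n))) : Prop :=
  ∀ u ∈ SKset n, ∀ v ∈ SKset n, (cubeGraph n).Adj u v → (u ∈ V1 ∧ v ∈ V1) ∨ (u ∈ V2 ∧ v ∈ V2)

namespace CoversEdges
variable {n : ℕ} {V1 V2 : Set (Finset (Fin n))}

theorem symm (h : CoversEdges V1 V2) : CoversEdges V2 V1 :=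
  fun u hu v hv huv => (h u hu v hv huv).symm

theorem mem_of_adj_singleton_pair (h : CoversEdges V1 V2) {x y : Fin n} (hxy : x ≠ y)
    (hnot : {x} ∉ V2 ∨ {x, y} ∉ V2) : {x} ∈ V1 ∧ {x, y} ∈ V1 :=
  (h _ (singleton_mem_SKset x) _ (pair_mem_SKset hxy)
    (cubeGraph_adj_singleton_pair hxy)).resolve_right fun h2 => hnot.elim (· h2.1) (· h2.2)

theorem exists_singleton_mem_diff (h : CoversEdges V1 V2) (h1 : V1 ⊆ SKset n)
    (h2 : V2 ⊆ SKset n) (hpc2 : IsPC V2) {B : Finset (Fin n)} (hB1 : B ∈ V1) (hB2 : B ∉ V2) :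
    ∃ y, {y} ∈ V1 ∧ {y} ∉ V2 := by
  rcases h1 hB1 with hB | hB
  · obtain ⟨x, rfl⟩ := card_eq_one.1 hB
    exact ⟨x, hB1, hB2⟩
  · obtain ⟨x, y, hxy, rfl⟩ := card_eq_two.1 hB
    by_cases hx : {x} ∈ V2
    · by_cases hy : {y} ∈ V2
      · exact absurd (pair_mem_of_singleton_mem h2 hpc2 hxy hx hy) hB2
      · exact ⟨y, (h.mem_of_adj_singleton_pair hxy.symm (Or.inl hy)).1, hy⟩
    · exact ⟨x, (h.mem_of_adj_singleton_pair hxy (Or.inl hx)).1, hx⟩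

theorem singleton_mem_of_singleton_notMem (h : CoversEdges V1 V2) (h2 : V2 ⊆ SKset n)
    (hpc2 : IsPC V2) {y z w : Fin n} (hy : {y} ∉ V2) (hz : {z} ∉ V1) (hyz : y ≠ z)
    (hwy : w ≠ y) (hwz : w ≠ z) : {w} ∈ V1 := by
  have hyz2 : {y, z} ∈ V2 := pair_comm z y ▸ (h.symm.mem_of_adj_singleton_pair hyz.symm
    (Or.inl hz)).2
  have hyw2 : {y, w} ∉ V2 := fun hyw2 =>
    hy (singleton_mem_of_pair_mem h2 hpc2 hwy.symm hyz hwz hyw2 hyz2)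
  exact (h.mem_of_adj_singleton_pair hwy (Or.inr (pair_comm y w ▸ hyw2))).1

end CoversEdges

theorem exists_shatters_pair_of_not_peripheral {n : ℕ} (hn : 4 ≤ n)
    {V1 V2 : Set (Finset (Fin n))} (h1 : V1 ⊆ SKset n) (h2 : V2 ⊆ SKset n) (hpc1 : IsPC V1)
    (hpc2 : IsPC V2) (h : CoversEdges V1 V2) (hnp : ¬ (V1 ⊆ V2 ∨ V2 ⊆ V1)) :
    ∃ i j, i ≠ j ∧ Shatters V1 {i, j} ∧ Shatters V2 {i, j} := by
  obtain ⟨hnp1, hnp2⟩ := not_or.1 hnp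
  obtain ⟨B, hB1, hB2⟩ := Set.not_subset.1 hnp1
  obtain ⟨C, hC2, hC1⟩ := Set.not_subset.1 hnp2
  obtain ⟨y, hy1, hy2⟩ := h.exists_singleton_mem_diff h1 h2 hpc2 hB1 hB2
  obtain ⟨z, hz2, hz1⟩ := h.symm.exists_singleton_mem_diff h2 h1 hpc1 hC2 hC1
  have hyz : y ≠ z := by rintro rfl; exact hz1 hy1
  have hcard : 1 < #(univ \ {y, z}) := by
    rw [card_univ_sdiff, Fintype.card_fin, card_pair hyz]
    omega
  obtain ⟨u, hu, v, hv, huv⟩ := one_lt_card.1 hcard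
  simp only [mem_sdiff, mem_univ, mem_insert, mem_singleton, not_or, true_and] at hu hv
  have hmem : ∀ w, w ≠ y → w ≠ z → {w} ∈ V1 ∧ {w} ∈ V2 := fun w hwy hwz =>
    ⟨h.singleton_mem_of_singleton_notMem h2 hpc2 hy2 hz1 hyz hwy hwz,
      h.symm.singleton_mem_of_singleton_notMem h1 hpc1 hz1 hy2 hyz.symm hwz hwy⟩
  obtain ⟨hu1, hu2⟩ := hmem u hu.1 hu.2
  obtain ⟨hv1, hv2⟩ := hmem v hv.1 hv.2
  exact ⟨u, v, huv, shatters_pair_of_singleton_mem h1 hpc1 huv hu.1 hv.1 hu1 hv1 hy1,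
    shatters_pair_of_singleton_mem h2 hpc2 huv hu.2 hv.2 hu2 hv2 hz2⟩

theorem stmt13_general (n : ℕ) (hn : 4 ≤ n) (V1 V2 : Set (Finset (Fin n)))
    (h1 : V1 ⊆ SKset n) (h2 : V2 ⊆ SKset n) (hi1 : IsPC V1) (hi2 : IsPC V2)
    (hedge : ∀ u ∈ SKset n, ∀ v ∈ SKset n, (cubeGraph n).Adj u v →
      (u ∈ V1 ∧ v ∈ V1) ∨ (u ∈ V2 ∧ v ∈ V2))
    (hne : (V1 ∩ V2).Nonempty) :
    VCdimLE (expansion V1 V2) 2 ↔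
      (V1 ⊆ V2 ∨ V2 ⊆ V1) ∧ IsPC (V1 ∩ V2) ∧
        ((cubeGraph n).induce (V1 ∩ V2)).IsTree := by
  have h0 : V1 ∩ V2 ⊆ SKset n := Set.inter_subset_left.trans h1
  rw [vcdimLE_expansion_iff (fun B hB => card_le_two_of_mem_SKset (h1 hB))
    (fun B hB => card_le_two_of_mem_SKset (h2 hB))]
  constructor
  · intro hnot
    have hper : V1 ⊆ V2 ∨ V2 ⊆ V1 := by
      by_contra hnp
      obtain ⟨i, j, hij, hs⟩ := exists_shatters_pair_of_not_peripheral hn h1 h2 hi1 hi2 hedge hnp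
      exact hnot _ (card_pair hij) hs
    have hpc0 : IsPC (V1 ∩ V2) := by
      rcases hper with h | h
      · rwa [Set.inter_eq_left.2 h]
      · rwa [Set.inter_eq_right.2 h]
    refine ⟨hper, hpc0, (isTree_induce_iff_not_containsThreeSingletons h0 hpc0 hne).2 ?_⟩
    rintro ⟨a, b, c, hab, hac, hbc, ha, hb, hc⟩
    exact hnot _ (card_pair hab)
      ⟨shatters_pair_of_singleton_mem h1 hi1 hab hac hbc ha.1 hb.1 hc.1,
        shatters_pair_of_singleton_mem h2 hi2 hab hac hbc ha.2 hb.2 hc.2⟩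
  · rintro ⟨hper, hpc0, htree⟩ S hS hs
    obtain ⟨i, j, hij, rfl⟩ := card_eq_two.1 hS
    refine (isTree_induce_iff_not_containsThreeSingletons h0 hpc0 hne).1 htree
      (containsThreeSingletons_of_shatters_pair h0 hpc0 hij ?_)
    rcases hper with h | h
    · rw [Set.inter_eq_left.2 h]; exact hs.1
    · rw [Set.inter_eq_right.2 h]; exact hs.2

/-- An isometric expansion of `SK_n` (`n ≥ 4`) is two-dimensional iff the
expansion is peripheral and performed along an isometric subtree of `SK_n`. -/
theorem stmt13 (n : ℕ) (hn : 4 ≤ n) (V1 V2 : Set (Finset (Fin n)))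
    (h1 : V1 ⊆ SKset n) (h2 : V2 ⊆ SKset n) (hi1 : IsPC V1) (hi2 : IsPC V2)
    (hcov : V1 ∪ V2 = SKset n)
    (hedge : ∀ u ∈ SKset n, ∀ v ∈ SKset n, (cubeGraph n).Adj u v →
      (u ∈ V1 ∧ v ∈ V1) ∨ (u ∈ V2 ∧ v ∈ V2))
    (hne : (V1 ∩ V2).Nonempty) :
    VCdimLE (expansion V1 V2) 2 ↔
      (V1 ⊆ V2 ∨ V2 ⊆ V1) ∧ IsPC (V1 ∩ V2) ∧
        ((cubeGraph n).induce (V1 ∩ V2)).IsTree :=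
  stmt13_general n hn V1 V2 h1 h2 hi1 hi2 hedge hne
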